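/- Fix an integer x ≥ 1. Let W be a finite set of points of ℙ^2 and ℓ ⊂ ℙ^2 a line such that #(W ∩ ℓ) ≥ x + 1 and #(W ∖ ℓ) ≤ x. Then the corank of the evaluation map from degree-x homogeneous polynomials in x_0, x_1, x_2 to ℂ^W equals #(W ∩ ℓ) − x − 1. -/

import Mathlib

/-!
Restricted to `ℓ`, degree-`x` forms factor through binary forms of degree `x`, so the points of
`W ∩ ℓ` contribute rank at most `x + 1` and those of `W ∖ ℓ` at most `#(W ∖ ℓ)`. Conversely, a
set `T` with at most `x + 1` points on `ℓ` and at most `x` off `ℓ` imposes independent conditions: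
a product of linear forms isolates each point of `T ∩ ℓ` among the points of `T ∩ ℓ`, and a linear
form cutting out `ℓ` times such a product isolates each point of `T ∖ ℓ` among all of `T`; this
triangular pattern already forces surjectivity. Taking for `T` the set `W ∖ ℓ` together with
`x + 1` points of `W ∩ ℓ` gives the matching lower bound.
-/

open MvPolynomial Module

noncomputable section

/-- The evaluation map sending a degree-`x` form in `x_0, …, x_m` to its values at
the chosen representative vectors of the points of `W ⊂ ℙ^m`. -/
def evalMap (m x : ℕ) (W : Finset (Projectivization ℂ (Fin (m+1) → ℂ))) :
    (homogeneousSubmodule (Fin (m+1)) ℂ x) →ₗ[ℂ] (W → ℂ) :=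
  (LinearMap.pi fun w : W =>
    (MvPolynomial.aeval ((w : Projectivization ℂ (Fin (m+1) → ℂ)).rep)).toLinearMap) ∘ₗ
    (homogeneousSubmodule (Fin (m+1)) ℂ x).subtype

open Finset
open scoped LinearAlgebra.Projectivization

namespace Projectivization

variable {K V : Type*} [Field K] [AddCommGroup V] [Module K V]

theorem submodule_le_iff_rep_mem (p : ℙ K V) (ℓ : Submodule K V) :
    p.submodule ≤ ℓ ↔ p.rep ∈ ℓ := by
  rw [submodule_eq, Submodule.span_singleton_le_iff_mem]

theorem rep_notMem_submodule {p q : ℙ K V} (h : p ≠ q) : q.rep ∉ p.submodule := by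
  rw [submodule_eq, Submodule.mem_span_singleton]
  rintro ⟨a, ha⟩
  refine h (Eq.symm ?_)
  rw [← p.mk_rep, ← q.mk_rep, mk_eq_mk_iff']
  exact ⟨a, ha⟩

end Projectivization

namespace MvPolynomial

variable {σ τ K : Type*} [Field K]

instance [Finite σ] (n : ℕ) : Module.Finite K (homogeneousSubmodule σ K n) :=
  Module.Finite.iff_fg.mpr (homogeneousSubmodule_fg σ K n)

theorem finrank_homogeneousSubmodule [Fintype σ] (n : ℕ) :
    finrank K (homogeneousSubmodule σ K n) = (Fintype.card σ + n - 1).choose n := by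
  classical
  have hdeg : {d : σ →₀ ℕ | d.degree = n} = ((univ : Finset σ).finsuppAntidiag n : Set _) := by
    ext d
    simp [mem_finsuppAntidiag, Finsupp.degree_eq_sum]
  rw [homogeneousSubmodule_eq_finsupp_supported, AddMonoidAlgebra.supported,
    Submodule.comap_equiv_eq_map_symm, LinearEquiv.finrank_map_eq,
    (Finsupp.supportedEquivFinsupp _).finrank_eq, hdeg, finrank_finsupp_self]
  simp only [coe_sort_coe, Fintype.card_coe]
  rw [card_finsuppAntidiag_nat_eq_choose, card_univ]

theorem finrank_homogeneousSubmodule_fin_two (n : ℕ) :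
    finrank K (homogeneousSubmodule (Fin 2) K n) = n + 1 := by
  rw [finrank_homogeneousSubmodule, Fintype.card_fin, show 2 + n - 1 = n + 1 by omega,
    Nat.choose_succ_self_right]

def linearForm [Fintype σ] (φ : Dual K (σ → K)) : MvPolynomial σ K :=
  ∑ i, C (φ (Pi.basisFun K σ i)) * X i

theorem isHomogeneous_linearForm [Fintype σ] (φ : Dual K (σ → K)) :
    (linearForm φ).IsHomogeneous 1 :=
  IsHomogeneous.sum _ _ _ fun i _ => isHomogeneous_C_mul_X _ i

@[simp]
theorem aeval_linearForm [Fintype σ] (φ : Dual K (σ → K)) (v : σ → K) :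
    aeval v (linearForm φ) = φ v := by
  conv_rhs => rw [← (Pi.basisFun K σ).sum_equivFun v]
  simp [linearForm, mul_comm]

theorem exists_isHomogeneous_one_of_notMem [Fintype σ] {p : Submodule K (σ → K)} {v : σ → K}
    (hv : v ∉ p) :
    ∃ F : MvPolynomial σ K, F.IsHomogeneous 1 ∧ (∀ w ∈ p, aeval w F = 0) ∧ aeval v F ≠ 0 := by
  obtain ⟨φ, hφv, hφp⟩ := p.exists_dual_map_eq_bot_of_notMem hv inferInstance
  refine ⟨linearForm φ, isHomogeneous_linearForm φ, fun w hw => ?_, by simpa using hφv⟩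
  simpa [hφp] using Submodule.mem_map_of_mem (f := φ) hw

def linearSubst [Fintype τ] (M : (τ → K) →ₗ[K] (σ → K)) :
    MvPolynomial σ K →ₐ[K] MvPolynomial τ K :=
  bind₁ fun i => linearForm (LinearMap.proj i ∘ₗ M)

theorem aeval_linearSubst [Fintype τ] (M : (τ → K) →ₗ[K] (σ → K)) (c : τ → K)
    (P : MvPolynomial σ K) : aeval c (linearSubst M P) = aeval (M c) P := by
  simp [linearSubst, aeval_bind₁]

theorem IsHomogeneous.linearSubst [Fintype τ] {P : MvPolynomial σ K} {n : ℕ}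
    (hP : P.IsHomogeneous n) (M : (τ → K) →ₗ[K] (σ → K)) :
    (MvPolynomial.linearSubst M P).IsHomogeneous n := by
  have h := hP.aeval (fun i => linearForm (LinearMap.proj i ∘ₗ M)) fun _ =>
    isHomogeneous_linearForm _
  rw [one_mul] at h
  exact h

theorem exists_isHomogeneous_vanishing_of_notMem [Fintype σ] (T : Finset (ℙ K (σ → K)))
    {t : ℙ K (σ → K)} (ht : t ∉ T) {d : ℕ} (hd : #T ≤ d) :
    ∃ F : MvPolynomial σ K, F.IsHomogeneous d ∧ (∀ p ∈ T, aeval p.rep F = 0) ∧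
      aeval t.rep F ≠ 0 := by
  classical
  induction T using Finset.induction_on generalizing d with
  | empty =>
    obtain ⟨G, hG, -, hGt⟩ := exists_isHomogeneous_one_of_notMem (p := ⊥) (v := t.rep)
      (by simpa using t.rep_nonzero)
    refine ⟨G ^ d, by simpa using hG.pow d, by simp, ?_⟩
    rw [map_pow]
    exact pow_ne_zero d hGt
  | insert a T haT ih =>
    rw [card_insert_of_notMem haT] at hd
    obtain ⟨F, hF, hFT, hFt⟩ := ih (fun h => ht (mem_insert_of_mem h)) (d := d - 1) (by omega)
    obtain ⟨G, hG, hGa, hGt⟩ := exists_isHomogeneous_one_of_notMem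
      (Projectivization.rep_notMem_submodule fun h : a = t => ht (h ▸ mem_insert_self a T))
    refine ⟨G * F, by simpa [show 1 + (d - 1) = d by omega] using hG.mul hF, ?_, ?_⟩
    · intro p hp
      rw [map_mul]
      rcases mem_insert.mp hp with rfl | hp
      · rw [hGa _ ((Projectivization.submodule_le_iff_rep_mem _ _).mp le_rfl), zero_mul]
      · rw [hFT p hp, mul_zero]
    · rw [map_mul]
      exact mul_ne_zero hGt hFt

end MvPolynomial

theorem LinearMap.finrank_range_prod_le {K V M N : Type*} [Field K] [AddCommGroup V] [Module K V]
    [AddCommGroup M] [Module K M] [AddCommGroup N] [Module K N] [FiniteDimensional K M]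
    [FiniteDimensional K N] (f : V →ₗ[K] M) (g : V →ₗ[K] N) :
    finrank K (range (f.prod g)) ≤ finrank K (range f) + finrank K (range g) := by
  have hsplit : f.prod g = inl K M N ∘ₗ f + inr K M N ∘ₗ g := by
    ext v <;> simp
  calc finrank K (range (f.prod g))
      ≤ finrank K ↥(range (inl K M N ∘ₗ f) ⊔ range (inr K M N ∘ₗ g)) :=
        Submodule.finrank_mono (hsplit ▸ range_add_le _ _)
    _ ≤ finrank K (range (inl K M N ∘ₗ f)) + finrank K (range (inr K M N ∘ₗ g)) :=
        Submodule.finrank_add_le_finrank_add_finrank _ _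
    _ ≤ finrank K (range f) + finrank K (range g) := by
        rw [range_comp, range_comp]
        exact add_le_add (Submodule.finrank_map_le _ _) (Submodule.finrank_map_le _ _)

theorem Submodule.eq_top_of_forall_exists_isolating {K ι : Type*} [Field K] [Fintype ι]
    {R : Submodule K (ι → K)} (p : ι → Prop)
    (hp : ∀ i, p i → ∃ f ∈ R, f i ≠ 0 ∧ ∀ j ≠ i, f j = 0)
    (hnp : ∀ i, ¬ p i → ∃ f ∈ R, f i ≠ 0 ∧ ∀ j ≠ i, ¬ p j → f j = 0) : R = ⊤ := by
  classical
  have single_mem {i : ι} {f : ι → K} (hf : f ∈ R) (hfi : f i ≠ 0) (hfj : ∀ j ≠ i, f j = 0) :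
      Pi.single i 1 ∈ R := by
    have : f = f i • Pi.single i 1 := by
      ext j
      by_cases hj : j = i <;> simp [hj, hfj]
    rw [this, Submodule.smul_mem_iff _ hfi] at hf
    exact hf
  have hsingle_p : ∀ i, p i → Pi.single i 1 ∈ R := fun i hi => by
    obtain ⟨f, hf, hfi, hfj⟩ := hp i hi
    exact single_mem hf hfi hfj
  have hsingle : ∀ i, Pi.single i 1 ∈ R := fun i => by
    by_cases hi : p i
    · exact hsingle_p i hi
    obtain ⟨f, hf, hfi, hfj⟩ := hnp i hi
    let g := f - ∑ j ∈ univ.filter p, f j • Pi.single j 1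
    have hgR : g ∈ R :=
      R.sub_mem hf (R.sum_mem fun j hj => R.smul_mem _ (hsingle_p j (mem_filter.mp hj).2))
    refine single_mem hgR ?_ fun j hj => ?_
    · simpa [g, Finset.sum_apply, Pi.single_apply, hi] using hfi
    · by_cases hpj : p j <;> simp [g, Finset.sum_apply, Pi.single_apply, hpj, hfj j hj]
  rw [eq_top_iff, ← (Pi.basisFun K ι).span_eq, Submodule.span_le]
  rintro _ ⟨i, rfl⟩
  simpa using hsingle i

section evalMap

variable {m x : ℕ}

open Projectivization

@[simp]
theorem evalMap_apply (W : Finset (ℙ ℂ (Fin (m+1) → ℂ)))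
    (F : homogeneousSubmodule (Fin (m+1)) ℂ x) (w : W) :
    evalMap m x W F w = aeval (w : ℙ ℂ (Fin (m+1) → ℂ)).rep (F : MvPolynomial _ ℂ) :=
  rfl

theorem evalMap_eq_funLeft_comp {A W : Finset (ℙ ℂ (Fin (m+1) → ℂ))} (hAW : A ⊆ W) :
    evalMap m x A = LinearMap.funLeft ℂ ℂ (fun a : A => ⟨a, hAW a.2⟩) ∘ₗ evalMap m x W :=
  rfl

theorem finrank_range_evalMap_mono {A W : Finset (ℙ ℂ (Fin (m+1) → ℂ))} (hAW : A ⊆ W) :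
    finrank ℂ (LinearMap.range (evalMap m x A)) ≤
      finrank ℂ (LinearMap.range (evalMap m x W)) := by
  rw [evalMap_eq_funLeft_comp hAW, LinearMap.range_comp]
  exact Submodule.finrank_map_le _ _

theorem finrank_range_evalMap_le_add (W : Finset (ℙ ℂ (Fin (m+1) → ℂ)))
    (P : ℙ ℂ (Fin (m+1) → ℂ) → Prop) [DecidablePred P] :
    finrank ℂ (LinearMap.range (evalMap m x W)) ≤
      finrank ℂ (LinearMap.range (evalMap m x (W.filter P))) +
        finrank ℂ (LinearMap.range (evalMap m x (W.filter (¬ P ·)))) := by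
  let Ψ := (LinearMap.funLeft ℂ ℂ fun a : W.filter P => (⟨a, (mem_filter.mp a.2).1⟩ : W)).prod
    (LinearMap.funLeft ℂ ℂ fun a : W.filter (¬ P ·) => (⟨a, (mem_filter.mp a.2).1⟩ : W))
  have hΨ : Function.Injective Ψ := by
    rw [← LinearMap.ker_eq_bot, eq_bot_iff]
    intro f hf
    ext w
    by_cases hw : P w
    · exact congr_fun (congr_arg Prod.fst hf) ⟨w, mem_filter.mpr ⟨w.2, hw⟩⟩
    · exact congr_fun (congr_arg Prod.snd hf) ⟨w, mem_filter.mpr ⟨w.2, hw⟩⟩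
  have hfac : Ψ ∘ₗ evalMap m x W =
      (evalMap m x (W.filter P)).prod (evalMap m x (W.filter (¬ P ·))) :=
    LinearMap.ext fun F => rfl
  rw [(Submodule.equivMapOfInjective Ψ hΨ _).finrank_eq, ← LinearMap.range_comp, hfac]
  exact LinearMap.finrank_range_prod_le _ _

theorem finrank_range_evalMap_le_of_forall_submodule_le (ℓ : Submodule ℂ (Fin (m+1) → ℂ))
    {L : Finset (ℙ ℂ (Fin (m+1) → ℂ))} (hL : ∀ p ∈ L, p.submodule ≤ ℓ) :
    finrank ℂ (LinearMap.range (evalMap m x L)) ≤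
      finrank ℂ (homogeneousSubmodule (Fin (finrank ℂ ℓ)) ℂ x) := by
  let M := ℓ.subtype ∘ₗ (finBasis ℂ ℓ).equivFun.symm.toLinearMap
  have hM (p : L) : ∃ c, M c = (p : ℙ ℂ _).rep :=
    ⟨(finBasis ℂ ℓ).equivFun ⟨_, (submodule_le_iff_rep_mem _ _).mp (hL _ p.2)⟩, by simp [M]⟩
  choose c hc using hM
  let subst : homogeneousSubmodule (Fin (m+1)) ℂ x →ₗ[ℂ]
      homogeneousSubmodule (Fin (finrank ℂ ℓ)) ℂ x :=
    LinearMap.codRestrict _ ((linearSubst M).toLinearMap ∘ₗ Submodule.subtype _)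
      fun F => F.2.linearSubst M
  let evalCoords : homogeneousSubmodule (Fin (finrank ℂ ℓ)) ℂ x →ₗ[ℂ] (L → ℂ) :=
    LinearMap.pi fun p => (aeval (c p)).toLinearMap ∘ₗ Submodule.subtype _
  have hfac : evalMap m x L = evalCoords ∘ₗ subst :=
    LinearMap.ext fun F => funext fun p => by
      change aeval _ F.1 = aeval (c p) (linearSubst M F.1)
      rw [aeval_linearSubst, hc]
  rw [hfac]
  exact (Submodule.finrank_mono (LinearMap.range_comp_le_range _ _)).trans
    (LinearMap.finrank_range_le _)

theorem range_evalMap_eq_top_of_card_filter_le (ℓ : Submodule ℂ (Fin (m+1) → ℂ))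
    (T : Finset (ℙ ℂ (Fin (m+1) → ℂ))) [DecidablePred fun p : ℙ ℂ _ => p.submodule ≤ ℓ]
    (hon : #(T.filter fun p => p.submodule ≤ ℓ) ≤ x + 1)
    (hoff : #(T.filter fun p => ¬ p.submodule ≤ ℓ) ≤ x) :
    LinearMap.range (evalMap m x T) = ⊤ := by
  classical
  refine Submodule.eq_top_of_forall_exists_isolating (fun t : T => ¬ (t : ℙ ℂ _).submodule ≤ ℓ)
    (fun t ht => ?_) (fun t ht => ?_)
  · have htoff : (t : ℙ ℂ _) ∈ T.filter fun p => ¬ p.submodule ≤ ℓ := mem_filter.mpr ⟨t.2, ht⟩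
    have hx : 0 < x := (card_pos.mpr ⟨_, htoff⟩).trans_le hoff
    obtain ⟨G, hG, hGℓ, hGt⟩ :=
      exists_isHomogeneous_one_of_notMem (mt (submodule_le_iff_rep_mem _ ℓ).mpr ht)
    obtain ⟨F, hF, hFT, hFt⟩ := exists_isHomogeneous_vanishing_of_notMem _ (notMem_erase _ _)
      (d := x - 1) (by rw [card_erase_of_mem htoff]; omega)
    have hGF : (G * F).IsHomogeneous x := by
      simpa [show 1 + (x - 1) = x by omega] using hG.mul hF
    refine ⟨evalMap m x T ⟨G * F, hGF⟩, LinearMap.mem_range_self _ _, ?_, fun j hj => ?_⟩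
    · rw [evalMap_apply, map_mul]
      exact mul_ne_zero hGt hFt
    rw [evalMap_apply, map_mul]
    by_cases hjℓ : (j : ℙ ℂ _).submodule ≤ ℓ
    · rw [hGℓ _ ((submodule_le_iff_rep_mem _ ℓ).mp hjℓ), zero_mul]
    · rw [hFT _ (mem_erase.mpr ⟨Subtype.coe_injective.ne hj, mem_filter.mpr ⟨j.2, hjℓ⟩⟩), mul_zero]
  · have hton : (t : ℙ ℂ _) ∈ T.filter fun p => p.submodule ≤ ℓ :=
      mem_filter.mpr ⟨t.2, not_not.mp ht⟩
    obtain ⟨F, hF, hFT, hFt⟩ := exists_isHomogeneous_vanishing_of_notMem _ (notMem_erase _ _)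
      (d := x) (by rw [card_erase_of_mem hton]; omega)
    refine ⟨evalMap m x T ⟨F, hF⟩, LinearMap.mem_range_self _ _, hFt, fun j hj hjℓ => ?_⟩
    exact hFT _ (mem_erase.mpr ⟨Subtype.coe_injective.ne hj, mem_filter.mpr ⟨j.2, not_not.mp hjℓ⟩⟩)

theorem finrank_range_evalMap_le_of_finrank_eq_two (ℓ : Submodule ℂ (Fin (m+1) → ℂ))
    (hℓ : finrank ℂ ℓ = 2) (W : Finset (ℙ ℂ (Fin (m+1) → ℂ)))
    [DecidablePred fun p : ℙ ℂ _ => p.submodule ≤ ℓ] :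
    finrank ℂ (LinearMap.range (evalMap m x W)) ≤
      x + 1 + #(W.filter fun p => ¬ p.submodule ≤ ℓ) := by
  have hon := finrank_range_evalMap_le_of_forall_submodule_le ℓ (x := x)
    (L := W.filter fun p => p.submodule ≤ ℓ) fun p hp => (mem_filter.mp hp).2
  rw [hℓ, finrank_homogeneousSubmodule_fin_two] at hon
  have hoff := (LinearMap.range (evalMap m x (W.filter fun p => ¬ p.submodule ≤ ℓ))).finrank_le
  rw [finrank_fintype_fun_eq_card, Fintype.card_coe] at hoff
  exact (finrank_range_evalMap_le_add W _).trans (add_le_add hon hoff)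

theorem le_finrank_range_evalMap (ℓ : Submodule ℂ (Fin (m+1) → ℂ))
    (W : Finset (ℙ ℂ (Fin (m+1) → ℂ))) [DecidablePred fun p : ℙ ℂ _ => p.submodule ≤ ℓ]
    (hon : x + 1 ≤ #(W.filter fun p => p.submodule ≤ ℓ))
    (hoff : #(W.filter fun p => ¬ p.submodule ≤ ℓ) ≤ x) :
    x + 1 + #(W.filter fun p => ¬ p.submodule ≤ ℓ) ≤
      finrank ℂ (LinearMap.range (evalMap m x W)) := by
  set B := W.filter fun p => ¬ p.submodule ≤ ℓ
  have hW : #(W.filter fun p => p.submodule ≤ ℓ) + #B = #W := card_filter_add_card_filter_not _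
  obtain ⟨T, hBT, hTW, hT⟩ := exists_subsuperset_card_eq (filter_subset _ W)
    (show #B ≤ x + 1 + #B by omega) (by omega)
  have hToff : T.filter (fun p => ¬ p.submodule ≤ ℓ) = B :=
    (filter_subset_filter _ hTW).antisymm fun p hp =>
      mem_filter.mpr ⟨hBT hp, (mem_filter.mp hp).2⟩
  have hTon : #(T.filter fun p => p.submodule ≤ ℓ) = x + 1 := by
    have := card_filter_add_card_filter_not (s := T) fun p => p.submodule ≤ ℓ
    rw [hToff] at this
    omega
  have hTfull : finrank ℂ (LinearMap.range (evalMap m x T)) = #T := by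
    rw [range_evalMap_eq_top_of_card_filter_le ℓ T hTon.le (hToff ▸ hoff), finrank_top,
      finrank_fintype_fun_eq_card, Fintype.card_coe]
  exact hT.ge.trans (hTfull ▸ finrank_range_evalMap_mono hTW)

end evalMap

theorem corank_eq_in_plane_general (x : ℕ)
    (W : Finset (Projectivization ℂ (Fin (2+1) → ℂ)))
    (ℓ : Submodule ℂ (Fin (2+1) → ℂ)) (hℓ : finrank ℂ ℓ = 2)
    (h1 : x + 1 ≤ ((W : Set (Projectivization ℂ (Fin (2+1) → ℂ))) ∩
      {p | p.submodule ≤ ℓ}).ncard)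
    (h2 : ((W : Set (Projectivization ℂ (Fin (2+1) → ℂ))) \
      {p | p.submodule ≤ ℓ}).ncard ≤ x) :
    finrank ℂ (LinearMap.range (evalMap 2 x W)) +
      ((W : Set (Projectivization ℂ (Fin (2+1) → ℂ))) ∩ {p | p.submodule ≤ ℓ}).ncard =
      W.card + x + 1 := by
  classical
  have hon : ((W : Set (ℙ ℂ (Fin (2+1) → ℂ))) ∩ {p | p.submodule ≤ ℓ}).ncard =
      #(W.filter fun p => p.submodule ≤ ℓ) := by
    rw [← Set.ncard_coe_finset, coe_filter]
    rfl
  have hoff : ((W : Set (ℙ ℂ (Fin (2+1) → ℂ))) \ {p | p.submodule ≤ ℓ}).ncard =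
      #(W.filter fun p => ¬ p.submodule ≤ ℓ) := by
    rw [← Set.ncard_coe_finset, coe_filter]
    rfl
  rw [hon] at h1 ⊢
  rw [hoff] at h2
  have hW := card_filter_add_card_filter_not (s := W) fun p => p.submodule ≤ ℓ
  have upper := finrank_range_evalMap_le_of_finrank_eq_two ℓ hℓ W (x := x)
  have lower := le_finrank_range_evalMap ℓ W h1 h2
  omega

/-- **Base case `m = 2` of Lemma 2 of Ballico–Bernardi.**  If `W ⊂ ℙ²` is a finite
set and `ℓ ⊂ ℙ²` a line with `#(W ∩ ℓ) ≥ x + 1` and `#(W ∖ ℓ) ≤ x`, then the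
corank of the evaluation map on degree-`x` forms equals `#(W ∩ ℓ) − x − 1`, i.e.
`rank + #(W ∩ ℓ) = #W + x + 1`. -/
theorem corank_eq_in_plane (x : ℕ) (hx : 1 ≤ x)
    (W : Finset (Projectivization ℂ (Fin (2+1) → ℂ)))
    (ℓ : Submodule ℂ (Fin (2+1) → ℂ)) (hℓ : finrank ℂ ℓ = 2)
    (h1 : x + 1 ≤ ((W : Set (Projectivization ℂ (Fin (2+1) → ℂ))) ∩
      {p | p.submodule ≤ ℓ}).ncard)
    (h2 : ((W : Set (Projectivization ℂ (Fin (2+1) → ℂ))) \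
      {p | p.submodule ≤ ℓ}).ncard ≤ x) :
    finrank ℂ (LinearMap.range (evalMap 2 x W)) +
      ((W : Set (Projectivization ℂ (Fin (2+1) → ℂ))) ∩ {p | p.submodule ≤ ℓ}).ncard =
      W.card + x + 1 :=
  corank_eq_in_plane_general x W ℓ hℓ h1 h2

end
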